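/- Assume Lipschitz continuity of the transition kernels with constant C_p. Let π and π1 be two policies and consider the N-player game in which player 1 uses π1 and players 2, …, N use π. Then for every t ∈ 𝒯, the empirical state-action distribution satisfies E‖L_t^(N) − Ψ_t(π)‖_1 ≤ (1/(2√N) + 2/N)·|S||A|·((C_{p,S,A}^{|𝒯|} − 1)/(C_{p,S,A} − 1)), where C_{p,S,A} := (C_p + 1)·|S||A|, ‖·‖_1 is the ℓ1 norm on ℝ^{S×A}, and Ψ(π) is the mean-field flow induced by π. -/

import Mathlib

open Finset

namespace CMFG

/-- Membership in the probability simplex on a finite type. -/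
def IsSimplex {X : Type*} [Fintype X] (f : X → ℝ) : Prop :=
  (∀ x, 0 ≤ f x) ∧ ∑ x, f x = 1

variable {S A : Type*} [Fintype S] [Fintype A]

/-- A (Markov, randomized) policy: `π t s ∈ Δ(A)` for every time `t` and state `s`. -/
def IsPolicy (π : ℕ → S → A → ℝ) : Prop := ∀ t s, IsSimplex (π t s)

/-- A mean-field flow: `L t ∈ Δ(S × A)` for every time `t`. -/
def IsFlow (L : ℕ → S × A → ℝ) : Prop := ∀ t, IsSimplex (L t)

/-- The transition data is a Markov kernel: `p t s a m ∈ Δ(S)` whenever `m ∈ Δ(S × A)`. -/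
def IsKernel (T : ℕ) (p : ℕ → S → A → (S × A → ℝ) → S → ℝ) : Prop :=
  ∀ t ≤ T, ∀ s a m, IsSimplex m → IsSimplex (p t s a m)

/-- The occupation measure `Ψ(π, L)` of a representative agent using policy `π`
under the mean-field flow `L`. -/
def psi (μ0 : S → ℝ) (p : ℕ → S → A → (S × A → ℝ) → S → ℝ)
    (π : ℕ → S → A → ℝ) (L : ℕ → S × A → ℝ) : ℕ → S × A → ℝ
  | 0 => fun sa => π 0 sa.1 sa.2 * μ0 sa.1
  | t + 1 => fun sa =>
      π (t + 1) sa.1 sa.2 *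
        ∑ sa' : S × A, p t sa'.1 sa'.2 (L t) sa.1 * psi μ0 p π L t sa'

/-- The mean-field flow `Ψ(π)` induced by the policy `π` alone. -/
def psiInd (μ0 : S → ℝ) (p : ℕ → S → A → (S × A → ℝ) → S → ℝ)
    (π : ℕ → S → A → ℝ) : ℕ → S × A → ℝ
  | 0 => fun sa => π 0 sa.1 sa.2 * μ0 sa.1
  | t + 1 => fun sa =>
      π (t + 1) sa.1 sa.2 *
        ∑ sa' : S × A, p t sa'.1 sa'.2 (psiInd μ0 p π t) sa.1 * psiInd μ0 p π t sa'

/-- Expected cumulative reward `V^π(L)` of policy `π` under the mean-field flow `L`. -/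
def V (T : ℕ) (μ0 : S → ℝ) (p : ℕ → S → A → (S × A → ℝ) → S → ℝ)
    (r : ℕ → S → A → (S × A → ℝ) → ℝ) (π : ℕ → S → A → ℝ) (L : ℕ → S × A → ℝ) : ℝ :=
  ∑ t ∈ Finset.range (T + 1), ∑ sa : S × A, r t sa.1 sa.2 (L t) * psi μ0 p π L t sa

/-- Expected cumulative cost `𝒞^π(L) ∈ ℝ^k` of policy `π` under the mean-field flow `L`. -/
def Cost (T k : ℕ) (μ0 : S → ℝ) (p : ℕ → S → A → (S × A → ℝ) → S → ℝ)
    (c : ℕ → S → A → (S × A → ℝ) → Fin k → ℝ) (π : ℕ → S → A → ℝ)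
    (L : ℕ → S × A → ℝ) : Fin k → ℝ :=
  fun i => ∑ t ∈ Finset.range (T + 1), ∑ sa : S × A, c t sa.1 sa.2 (L t) i * psi μ0 p π L t sa

/-- `π` is an optimal policy of the constrained MDP `CMDP(L)` with threshold `γ0`. -/
def IsCMDPOptimal (T k : ℕ) (μ0 : S → ℝ) (p : ℕ → S → A → (S × A → ℝ) → S → ℝ)
    (r : ℕ → S → A → (S × A → ℝ) → ℝ) (c : ℕ → S → A → (S × A → ℝ) → Fin k → ℝ)
    (γ0 : Fin k → ℝ) (π : ℕ → S → A → ℝ) (L : ℕ → S × A → ℝ) : Prop :=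
  IsPolicy π ∧ (∀ i, Cost T k μ0 p c π L i ≤ γ0 i) ∧
    ∀ π', IsPolicy π' → (∀ i, Cost T k μ0 p c π' L i ≤ γ0 i) →
      V T μ0 p r π' L ≤ V T μ0 p r π L

/-- `π` is an optimal policy of the unconstrained MDP `MDP(L)`. -/
def IsMDPOptimal (T : ℕ) (μ0 : S → ℝ) (p : ℕ → S → A → (S × A → ℝ) → S → ℝ)
    (r : ℕ → S → A → (S × A → ℝ) → ℝ) (π : ℕ → S → A → ℝ) (L : ℕ → S × A → ℝ) : Prop :=
  IsPolicy π ∧ ∀ π', IsPolicy π' → V T μ0 p r π' L ≤ V T μ0 p r π L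

/-- `(π, L)` is a Nash equilibrium of the constrained mean-field game (Definition 2.1):
optimality for `CMDP(L)` together with the consistency condition `L = Ψ(π)` on `𝒯`. -/
def IsCMFGNash (T k : ℕ) (μ0 : S → ℝ) (p : ℕ → S → A → (S × A → ℝ) → S → ℝ)
    (r : ℕ → S → A → (S × A → ℝ) → ℝ) (c : ℕ → S → A → (S × A → ℝ) → Fin k → ℝ)
    (γ0 : Fin k → ℝ) (π : ℕ → S → A → ℝ) (L : ℕ → S × A → ℝ) : Prop :=
  IsCMDPOptimal T k μ0 p r c γ0 π L ∧ ∀ t ≤ T, L t = psiInd μ0 p π t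

/-- Strict feasibility (Assumption 3.1) with margin `δ`. -/
def StrictFeasible (T k : ℕ) (μ0 : S → ℝ) (p : ℕ → S → A → (S × A → ℝ) → S → ℝ)
    (c : ℕ → S → A → (S × A → ℝ) → Fin k → ℝ) (γ0 : Fin k → ℝ) (δ : ℝ) : Prop :=
  0 < δ ∧ ∀ L, IsFlow L → ∀ i : Fin k, ∃ π, IsPolicy π ∧
    (∀ j, Cost T k μ0 p c π L j ≤ γ0 j) ∧ Cost T k μ0 p c π L i ≤ γ0 i - δ

/-- Strengthened strict feasibility (Assumption 5.1) with margin `δ`. -/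
def StrongFeasible (T k : ℕ) (μ0 : S → ℝ) (p : ℕ → S → A → (S × A → ℝ) → S → ℝ)
    (c : ℕ → S → A → (S × A → ℝ) → Fin k → ℝ) (γ0 : Fin k → ℝ) (δ : ℝ) : Prop :=
  0 < δ ∧ ∀ L, IsFlow L → ∃ π, IsPolicy π ∧ ∀ i, Cost T k μ0 p c π L i ≤ γ0 i - δ

/-- Continuity (Assumption 3.2): `p`, `r`, `c` are continuous in the mean-field argument. -/
def ContinuousData (T k : ℕ) (p : ℕ → S → A → (S × A → ℝ) → S → ℝ)
    (r : ℕ → S → A → (S × A → ℝ) → ℝ)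
    (c : ℕ → S → A → (S × A → ℝ) → Fin k → ℝ) : Prop :=
  (∀ t ≤ T, ∀ s a, ContinuousOn (fun m : S × A → ℝ => p t s a m) {m | IsSimplex m}) ∧
  (∀ t ≤ T, ∀ s a, ContinuousOn (fun m : S × A → ℝ => r t s a m) {m | IsSimplex m}) ∧
  (∀ t ≤ T, ∀ s a, ContinuousOn (fun m : S × A → ℝ => c t s a m) {m | IsSimplex m})

/-- Boundedness: `0 ≤ r ≤ rmax` and `0 ≤ c ≤ cmax` entrywise on the simplex. -/
def BoundedData (T k : ℕ) (r : ℕ → S → A → (S × A → ℝ) → ℝ)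
    (c : ℕ → S → A → (S × A → ℝ) → Fin k → ℝ) (rmax cmax : ℝ) : Prop :=
  ∀ t ≤ T, ∀ s a m, IsSimplex m →
    (0 ≤ r t s a m ∧ r t s a m ≤ rmax) ∧ ∀ i, 0 ≤ c t s a m i ∧ c t s a m i ≤ cmax

/-- The ℓ¹ norm of a finitely supported real vector. -/
def norm1 {J : Type*} [Fintype J] (v : J → ℝ) : ℝ := ∑ j, |v j|

/-- The ℓ² norm of a finitely supported real vector. -/
noncomputable def norm2 {J : Type*} [Fintype J] (v : J → ℝ) : ℝ :=
  Real.sqrt (∑ j, (v j) ^ 2)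

/-- Lipschitz continuity (Assumption 3.3) of `p`, `r`, `c` in the mean-field argument. -/
def LipschitzData (T k : ℕ) (p : ℕ → S → A → (S × A → ℝ) → S → ℝ)
    (r : ℕ → S → A → (S × A → ℝ) → ℝ)
    (c : ℕ → S → A → (S × A → ℝ) → Fin k → ℝ) (Cp Cr Cc : ℝ) : Prop :=
  0 < Cp ∧ 0 < Cr ∧ 0 < Cc ∧
  ∀ t ≤ T, ∀ m1 m2 : S × A → ℝ, IsSimplex m1 → IsSimplex m2 →
    ((∑ sa : S × A, ∑ s' : S, |p t sa.1 sa.2 m1 s' - p t sa.1 sa.2 m2 s'|) ≤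
        Cp * norm1 (fun sa => m1 sa - m2 sa)) ∧
    ((∑ sa : S × A, |r t sa.1 sa.2 m1 - r t sa.1 sa.2 m2|) ≤
        Cr * norm1 (fun sa => m1 sa - m2 sa)) ∧
    ((∑ sa : S × A, ∑ i, |c t sa.1 sa.2 m1 i - c t sa.1 sa.2 m2 i|) ≤
        Cc * norm1 (fun sa => m1 sa - m2 sa))

/-- Lipschitz continuity of the transition kernels alone. -/
def LipschitzKernel (T : ℕ) (p : ℕ → S → A → (S × A → ℝ) → S → ℝ) (Cp : ℝ) : Prop :=
  0 < Cp ∧ ∀ t ≤ T, ∀ m1 m2 : S × A → ℝ, IsSimplex m1 → IsSimplex m2 →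
    (∑ sa : S × A, ∑ s' : S, |p t sa.1 sa.2 m1 s' - p t sa.1 sa.2 m2 s'|) ≤
      Cp * norm1 (fun sa => m1 sa - m2 sa)

/-- The reward vector `r_L ∈ ℝ^{|S||A||𝒯|}`. -/
def rLvec (T : ℕ) (r : ℕ → S → A → (S × A → ℝ) → ℝ) (L : ℕ → S × A → ℝ) :
    Fin (T + 1) × S × A → ℝ :=
  fun x => r (x.1 : ℕ) x.2.1 x.2.2 (L (x.1 : ℕ))

/-- The cost matrix `c_L ∈ ℝ^{k × |S||A||𝒯|}`. -/
def cLmat (T k : ℕ) (c : ℕ → S → A → (S × A → ℝ) → Fin k → ℝ) (L : ℕ → S × A → ℝ) :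
    Fin k → Fin (T + 1) × S × A → ℝ :=
  fun i x => c (x.1 : ℕ) x.2.1 x.2.2 (L (x.1 : ℕ)) i

/-- The right-hand-side vector `b ∈ ℝ^{|S||𝒯|}`. -/
def bvec (T : ℕ) (μ0 : S → ℝ) : Fin (T + 1) × S → ℝ :=
  fun row => if (row.1 : ℕ) = T then μ0 row.2 else 0

/-- The constraint matrix `A_L ∈ ℝ^{|S||𝒯| × |S||A||𝒯|}`; `A_L d = b` encodes
`Σ_a d_0(s,a) = μ0(s)` and `Σ_a d_{t+1}(s,a) = Σ_{s',a'} p_t(s|s',a',L_t) d_t(s',a')`. -/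
def ALmat [DecidableEq S] (T : ℕ) (p : ℕ → S → A → (S × A → ℝ) → S → ℝ)
    (L : ℕ → S × A → ℝ) : Fin (T + 1) × S → Fin (T + 1) × S × A → ℝ :=
  fun row col =>
    if (row.1 : ℕ) < T then
      (if col.1 = row.1 then p (row.1 : ℕ) col.2.1 col.2.2 (L (row.1 : ℕ)) row.2 else 0) +
        (if (col.1 : ℕ) = (row.1 : ℕ) + 1 ∧ col.2.1 = row.2 then -1 else 0)
    else if (col.1 : ℕ) = 0 ∧ col.2.1 = row.2 then 1 else 0

/-- Matrix–vector product. -/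
def mulVec {I J : Type*} [Fintype J] (M : I → J → ℝ) (v : J → ℝ) : I → ℝ :=
  fun i => ∑ j, M i j * v j

/-- Transposed matrix–vector product `M^⊤ y`. -/
def tmulVec {I J : Type*} [Fintype I] (M : I → J → ℝ) (y : I → ℝ) : J → ℝ :=
  fun j => ∑ i, M i j * y i

/-- Euclidean inner product. -/
def dot {J : Type*} [Fintype J] (u v : J → ℝ) : ℝ := ∑ j, u j * v j

/-- View a vector indexed by `Fin (T+1) × S × A` as a time-indexed family. -/
def toFam (T : ℕ) (d : Fin (T + 1) × S × A → ℝ) : ℕ → S × A → ℝ :=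
  fun t sa => if h : t < T + 1 then d (⟨t, h⟩, sa.1, sa.2) else 0

/-- View a time-indexed family as a vector indexed by `Fin (T+1) × S × A`. -/
def toVec (T : ℕ) (d : ℕ → S × A → ℝ) : Fin (T + 1) × S × A → ℝ :=
  fun x => d (x.1 : ℕ) (x.2.1, x.2.2)

/-- `π ∈ Π(d)`: `π` is a policy inducing the occupation measure `d` wherever
`d` puts positive mass on a state. -/
def InPi (T : ℕ) (d : ℕ → S × A → ℝ) (π : ℕ → S → A → ℝ) : Prop :=
  IsPolicy π ∧ ∀ t ≤ T, ∀ s a, 0 < ∑ a' : A, d t (s, a') →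
    π t s a = d t (s, a) / ∑ a' : A, d t (s, a')

/-- Feasibility for the linear program `LP(L)`. -/
def LPFeasible [DecidableEq S] (T k : ℕ) (μ0 : S → ℝ)
    (p : ℕ → S → A → (S × A → ℝ) → S → ℝ)
    (c : ℕ → S → A → (S × A → ℝ) → Fin k → ℝ) (γ0 : Fin k → ℝ)
    (L : ℕ → S × A → ℝ) (d : Fin (T + 1) × S × A → ℝ) : Prop :=
  mulVec (ALmat T p L) d = bvec T μ0 ∧ (∀ i, dot (cLmat T k c L i) d ≤ γ0 i) ∧ ∀ x, 0 ≤ d x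

/-- Optimality for the linear program `LP(L)` (minimizing `-r_L^⊤ d`). -/
def LPOptimal [DecidableEq S] (T k : ℕ) (μ0 : S → ℝ)
    (p : ℕ → S → A → (S × A → ℝ) → S → ℝ) (r : ℕ → S → A → (S × A → ℝ) → ℝ)
    (c : ℕ → S → A → (S × A → ℝ) → Fin k → ℝ) (γ0 : Fin k → ℝ)
    (L : ℕ → S × A → ℝ) (d : Fin (T + 1) × S × A → ℝ) : Prop :=
  LPFeasible T k μ0 p c γ0 L d ∧
    ∀ d', LPFeasible T k μ0 p c γ0 L d' → dot (rLvec T r L) d' ≤ dot (rLvec T r L) d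

/-- The KKT system `𝒦(L)` associated with `LP(L)`. -/
def KKT [DecidableEq S] (T k : ℕ) (μ0 : S → ℝ)
    (p : ℕ → S → A → (S × A → ℝ) → S → ℝ) (r : ℕ → S → A → (S × A → ℝ) → ℝ)
    (c : ℕ → S → A → (S × A → ℝ) → Fin k → ℝ) (γ0 : Fin k → ℝ) (L : ℕ → S × A → ℝ)
    (d : Fin (T + 1) × S × A → ℝ) (y : Fin (T + 1) × S → ℝ)
    (z : Fin (T + 1) × S × A → ℝ) (lam : Fin k → ℝ) : Prop :=
  (∀ x, -(rLvec T r L x) =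
      tmulVec (ALmat T p L) y x + z x - ∑ i, cLmat T k c L i x * lam i) ∧
  mulVec (ALmat T p L) d = bvec T μ0 ∧
  (∀ i, dot (cLmat T k c L i) d ≤ γ0 i) ∧ (∀ x, 0 ≤ d x) ∧
  (∀ x, 0 ≤ z x) ∧ dot z d = 0 ∧ (∀ i, 0 ≤ lam i) ∧
  (∑ i, lam i * (dot (cLmat T k c L i) d - γ0 i)) = 0

/-- The population-level KKT system `𝒦^p(L)`. -/
def PopKKT [DecidableEq S] (T : ℕ) (μ0 : S → ℝ)
    (p : ℕ → S → A → (S × A → ℝ) → S → ℝ) (r : ℕ → S → A → (S × A → ℝ) → ℝ)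
    (L : ℕ → S × A → ℝ) (d : Fin (T + 1) × S × A → ℝ) (y : Fin (T + 1) × S → ℝ)
    (z : Fin (T + 1) × S × A → ℝ) : Prop :=
  (∀ x, -(rLvec T r L x) = tmulVec (ALmat T p L) y x + z x) ∧
  mulVec (ALmat T p L) d = bvec T μ0 ∧ (∀ x, 0 ≤ d x) ∧ (∀ x, 0 ≤ z x) ∧ dot z d = 0

/-- Bound for the dual variable `y` in CMFOMO. -/
noncomputable def yBound (cardS T : ℕ) (rmax cmax δ : ℝ) : ℝ :=
  (cardS : ℝ) * ((T : ℝ) + 1) * ((T : ℝ) + 2) / 2 * rmax * (1 + ((T : ℝ) + 1) / δ * cmax)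

/-- Bound for the dual variable `z` in CMFOMO. -/
noncomputable def zBound (cardS cardA T : ℕ) (rmax cmax δ : ℝ) : ℝ :=
  (cardS : ℝ) * (cardA : ℝ) * (((T : ℝ) + 1) ^ 2 - ((T : ℝ) + 1) + 2) * rmax *
    (1 + ((T : ℝ) + 1) / δ * cmax)

/-- Bound for the multiplier `λ` in CMFOMO. -/
noncomputable def lamBound (T : ℕ) (rmax δ : ℝ) : ℝ := ((T : ℝ) + 1) * rmax / δ

/-- The feasible region of the CMFOMO optimization problem. -/
noncomputable def CMFOMOFeasible (T k : ℕ) (rmax cmax δ : ℝ) (γ0 : Fin k → ℝ)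
    (Lv : Fin (T + 1) × S × A → ℝ) (y : Fin (T + 1) × S → ℝ)
    (z : Fin (T + 1) × S × A → ℝ) (lam w : Fin k → ℝ) : Prop :=
  (∀ x, 0 ≤ Lv x) ∧ (∀ t : Fin (T + 1), ∑ sa : S × A, Lv (t, sa.1, sa.2) = 1) ∧
  norm1 y ≤ yBound (Fintype.card S) T rmax cmax δ ∧
  (∀ x, 0 ≤ z x) ∧ norm1 z ≤ zBound (Fintype.card S) (Fintype.card A) T rmax cmax δ ∧
  (∀ i, 0 ≤ lam i ∧ lam i ≤ lamBound T rmax δ) ∧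
  (∀ i, 0 ≤ w i ∧ w i ≤ γ0 i)

/-- The CMFOMO objective function. -/
noncomputable def CMFOMOObj [DecidableEq S] (T k : ℕ) (μ0 : S → ℝ)
    (p : ℕ → S → A → (S × A → ℝ) → S → ℝ) (r : ℕ → S → A → (S × A → ℝ) → ℝ)
    (c : ℕ → S → A → (S × A → ℝ) → Fin k → ℝ) (γ0 : Fin k → ℝ)
    (c1 c2 c3 c4 c5 : ℝ) (Lv : Fin (T + 1) × S × A → ℝ) (y : Fin (T + 1) × S → ℝ)
    (z : Fin (T + 1) × S × A → ℝ) (lam w : Fin k → ℝ) : ℝ :=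
  c1 * norm2 (fun x => tmulVec (ALmat T p (toFam T Lv)) y x + z x +
        rLvec T r (toFam T Lv) x - ∑ i, cLmat T k c (toFam T Lv) i x * lam i) +
  c2 * norm2 (fun row => mulVec (ALmat T p (toFam T Lv)) Lv row - bvec T μ0 row) +
  c3 * dot z Lv +
  c4 * norm2 (fun i => γ0 i - dot (cLmat T k c (toFam T Lv) i) Lv - w i) +
  c5 * |∑ i, lam i * (γ0 i - dot (cLmat T k c (toFam T Lv) i) Lv)|

/-- The feasible region of the population-level CMFOMO problem. -/
noncomputable def PopCMFOMOFeasible (T k : ℕ) (rmax : ℝ) (γ0 : Fin k → ℝ)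
    (Lv : Fin (T + 1) × S × A → ℝ) (y : Fin (T + 1) × S → ℝ)
    (z : Fin (T + 1) × S × A → ℝ) (w : Fin k → ℝ) : Prop :=
  (∀ x, 0 ≤ Lv x) ∧ (∀ t : Fin (T + 1), ∑ sa : S × A, Lv (t, sa.1, sa.2) = 1) ∧
  norm1 y ≤ (Fintype.card S : ℝ) * ((T : ℝ) + 1) * ((T : ℝ) + 2) / 2 * rmax ∧
  (∀ x, 0 ≤ z x) ∧
  norm1 z ≤ (Fintype.card S : ℝ) * (Fintype.card A : ℝ) *
      (((T : ℝ) + 1) ^ 2 - ((T : ℝ) + 1) + 2) * rmax ∧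
  (∀ i, 0 ≤ w i ∧ w i ≤ γ0 i)

/-- The population-level CMFOMO objective function. -/
noncomputable def PopCMFOMOObj [DecidableEq S] (T k : ℕ) (μ0 : S → ℝ)
    (p : ℕ → S → A → (S × A → ℝ) → S → ℝ) (r : ℕ → S → A → (S × A → ℝ) → ℝ)
    (cp : ℕ → (S × A → ℝ) → Fin k → ℝ) (γ0 : Fin k → ℝ)
    (c1 c2 c3 c4 : ℝ) (Lv : Fin (T + 1) × S × A → ℝ) (y : Fin (T + 1) × S → ℝ)
    (z : Fin (T + 1) × S × A → ℝ) (w : Fin k → ℝ) : ℝ :=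
  c1 * norm2 (fun x => tmulVec (ALmat T p (toFam T Lv)) y x + z x + rLvec T r (toFam T Lv) x) +
  c2 * norm2 (fun row => mulVec (ALmat T p (toFam T Lv)) Lv row - bvec T μ0 row) +
  c3 * dot z Lv +
  c4 * norm2 (fun i => γ0 i -
    dot (cLmat T k (fun t _ _ m => cp t m) (toFam T Lv) i) Lv - w i)

/-- The optimal value `V*_c(L)` of the constrained MDP `CMDP(L)`. -/
noncomputable def Vstar (T k : ℕ) (μ0 : S → ℝ) (p : ℕ → S → A → (S × A → ℝ) → S → ℝ)
    (r : ℕ → S → A → (S × A → ℝ) → ℝ) (c : ℕ → S → A → (S × A → ℝ) → Fin k → ℝ)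
    (γ0 : Fin k → ℝ) (L : ℕ → S × A → ℝ) : ℝ :=
  sSup {v | ∃ π, IsPolicy π ∧ (∀ i, Cost T k μ0 p c π L i ≤ γ0 i) ∧ v = V T μ0 p r π L}

/-- The optimal value of the unconstrained MDP `MDP(L)`. -/
noncomputable def VstarU (T : ℕ) (μ0 : S → ℝ) (p : ℕ → S → A → (S × A → ℝ) → S → ℝ)
    (r : ℕ → S → A → (S × A → ℝ) → ℝ) (L : ℕ → S × A → ℝ) : ℝ :=
  sSup {v | ∃ π, IsPolicy π ∧ v = V T μ0 p r π L}

/-- The optimality gap `G_opt(π)`. -/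
noncomputable def Gopt (T k : ℕ) (μ0 : S → ℝ) (p : ℕ → S → A → (S × A → ℝ) → S → ℝ)
    (r : ℕ → S → A → (S × A → ℝ) → ℝ) (c : ℕ → S → A → (S × A → ℝ) → Fin k → ℝ)
    (γ0 : Fin k → ℝ) (π : ℕ → S → A → ℝ) : ℝ :=
  Vstar T k μ0 p r c γ0 (psiInd μ0 p π) - V T μ0 p r π (psiInd μ0 p π)

/-- The feasibility gap `G_fea(π)`. -/
noncomputable def Gfea (T k : ℕ) (μ0 : S → ℝ) (p : ℕ → S → A → (S × A → ℝ) → S → ℝ)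
    (c : ℕ → S → A → (S × A → ℝ) → Fin k → ℝ) (γ0 : Fin k → ℝ)
    (π : ℕ → S → A → ℝ) : ℝ :=
  norm2 (fun i : Fin k => min 0 (γ0 i - Cost T k μ0 p c π (psiInd μ0 p π) i))

/-- The population-level optimality gap. -/
noncomputable def GoptPop (T : ℕ) (μ0 : S → ℝ) (p : ℕ → S → A → (S × A → ℝ) → S → ℝ)
    (r : ℕ → S → A → (S × A → ℝ) → ℝ) (π : ℕ → S → A → ℝ) : ℝ :=
  VstarU T μ0 p r (psiInd μ0 p π) - V T μ0 p r π (psiInd μ0 p π)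

/-- The population-level feasibility gap. -/
noncomputable def GfeaPop (T k : ℕ) (μ0 : S → ℝ) (p : ℕ → S → A → (S × A → ℝ) → S → ℝ)
    (cp : ℕ → (S × A → ℝ) → Fin k → ℝ) (γ0 : Fin k → ℝ) (π : ℕ → S → A → ℝ) : ℝ :=
  norm2 (fun i : Fin k =>
    min 0 (γ0 i - ∑ t ∈ Finset.range (T + 1), cp t (psiInd μ0 p π t) i))

section NPlayer

variable [DecidableEq S] [DecidableEq A]

/-- Empirical state-action distribution of `N` players. -/
noncomputable def emp (N : ℕ) (x : Fin N → S × A) : S × A → ℝ :=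
  fun sa => (∑ i, if x i = sa then (1 : ℝ) else 0) / (N : ℝ)

/-- The joint law, at each time `t`, of the state-action profile of the `N` players
under the policy profile `πv`. -/
noncomputable def jointLaw (N : ℕ) (μ0 : S → ℝ) (p : ℕ → S → A → (S × A → ℝ) → S → ℝ)
    (πv : Fin N → ℕ → S → A → ℝ) : ℕ → (Fin N → S × A) → ℝ
  | 0 => fun x => ∏ i, μ0 (x i).1 * πv i 0 (x i).1 (x i).2
  | t + 1 => fun x => ∑ x' : Fin N → S × A, jointLaw N μ0 p πv t x' *
      ∏ i, p t (x' i).1 (x' i).2 (emp N x') (x i).1 * πv i (t + 1) (x i).1 (x i).2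

/-- Expected cumulative reward `V^{(i)}` of player `i` in the `N`-player game. -/
noncomputable def Vplayer (N T : ℕ) (μ0 : S → ℝ) (p : ℕ → S → A → (S × A → ℝ) → S → ℝ)
    (r : ℕ → S → A → (S × A → ℝ) → ℝ) (πv : Fin N → ℕ → S → A → ℝ) (i : Fin N) : ℝ :=
  ∑ t ∈ Finset.range (T + 1), ∑ x : Fin N → S × A,
    jointLaw N μ0 p πv t x * r t (x i).1 (x i).2 (emp N x)

/-- Expected cumulative cost `γ^{(i)}` of player `i` in the `N`-player game. -/
noncomputable def CostPlayer (N T k : ℕ) (μ0 : S → ℝ) (p : ℕ → S → A → (S × A → ℝ) → S → ℝ)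
    (c : ℕ → S → A → (S × A → ℝ) → Fin k → ℝ) (πv : Fin N → ℕ → S → A → ℝ)
    (i : Fin N) : Fin k → ℝ :=
  fun j => ∑ t ∈ Finset.range (T + 1), ∑ x : Fin N → S × A,
    jointLaw N μ0 p πv t x * c t (x i).1 (x i).2 (emp N x) j

/-- Feasibility gap `G_fea^{(i)}` of player `i` in the `N`-player game. -/
noncomputable def GfeaPlayer (N T k : ℕ) (μ0 : S → ℝ)
    (p : ℕ → S → A → (S × A → ℝ) → S → ℝ) (c : ℕ → S → A → (S × A → ℝ) → Fin k → ℝ)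
    (γ0 : Fin k → ℝ) (πv : Fin N → ℕ → S → A → ℝ) (i : Fin N) : ℝ :=
  norm2 (fun j : Fin k => min 0 (γ0 j - CostPlayer N T k μ0 p c πv i j))

/-- `(ε1, ε2)`-Nash equilibrium of the constrained `N`-player game. -/
noncomputable def IsEpsNash (N T k : ℕ) (μ0 : S → ℝ)
    (p : ℕ → S → A → (S × A → ℝ) → S → ℝ) (r : ℕ → S → A → (S × A → ℝ) → ℝ)
    (c : ℕ → S → A → (S × A → ℝ) → Fin k → ℝ) (γ0 : Fin k → ℝ)
    (πv : Fin N → ℕ → S → A → ℝ) (ε1 ε2 : ℝ) : Prop :=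
  ∀ i : Fin N,
    (∀ π', IsPolicy π' →
      GfeaPlayer N T k μ0 p c γ0 (Function.update πv i π') i = 0 →
      Vplayer N T μ0 p r (Function.update πv i π') i ≤ Vplayer N T μ0 p r πv i + ε1) ∧
    GfeaPlayer N T k μ0 p c γ0 πv i ≤ ε2

end NPlayer



/-! ### Auxiliary lemmas for Lemma B.2 -/

section B2Aux

set_option linter.unusedSectionVars false

variable {X : Type*} [Fintype X] [DecidableEq X] {N : ℕ}

lemma sum_prod_pi (f : Fin N → X → ℝ) :
    ∑ x : Fin N → X, ∏ i, f i (x i) = ∏ i, ∑ y, f i y := by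
  rw [Finset.prod_univ_sum, Fintype.piFinset_univ]

lemma expect_const (μ : Fin N → X → ℝ) (hμ1 : ∀ i, ∑ y, μ i y = 1) :
    ∑ x : Fin N → X, ∏ i, μ i (x i) = 1 := by
  rw [sum_prod_pi]; simp [hμ1]

lemma expect_eval (μ : Fin N → X → ℝ) (hμ1 : ∀ i, ∑ y, μ i y = 1)
    (i0 : Fin N) (g : X → ℝ) :
    ∑ x : Fin N → X, (∏ i, μ i (x i)) * g (x i0) = ∑ y, μ i0 y * g y := by
  have key : ∀ x : Fin N → X,
      (∏ i, μ i (x i)) * g (x i0) = ∏ i, (μ i (x i) * if i = i0 then g (x i) else 1) := by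
    intro x
    rw [Finset.prod_mul_distrib, Finset.prod_ite_eq' Finset.univ i0 (fun i => g (x i))]
    simp
  simp_rw [key]
  rw [sum_prod_pi (fun i y => μ i y * if i = i0 then g y else 1)]
  have : ∀ i : Fin N, (∑ y, μ i y * if i = i0 then g y else 1)
      = if i = i0 then ∑ y, μ i0 y * g y else 1 := by
    intro i
    by_cases h : i = i0 <;> simp [h, hμ1 i]
  simp_rw [this]
  rw [Finset.prod_ite_eq' Finset.univ i0 (fun _ => ∑ y, μ i0 y * g y)]
  simp

lemma expect_eval₂ (μ : Fin N → X → ℝ) (hμ1 : ∀ i, ∑ y, μ i y = 1)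
    (i0 j0 : Fin N) (hij : i0 ≠ j0) (g h : X → ℝ) :
    ∑ x : Fin N → X, (∏ i, μ i (x i)) * (g (x i0) * h (x j0))
      = (∑ y, μ i0 y * g y) * (∑ y, μ j0 y * h y) := by
  have key : ∀ x : Fin N → X,
      (∏ i, μ i (x i)) * (g (x i0) * h (x j0))
        = ∏ i, (μ i (x i) * ((if i = i0 then g (x i) else 1) * (if i = j0 then h (x i) else 1))) := by
    intro x
    simp_rw [Finset.prod_mul_distrib]
    rw [Finset.prod_ite_eq' Finset.univ i0 (fun i => g (x i)),
      Finset.prod_ite_eq' Finset.univ j0 (fun i => h (x i))]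
    simp [mul_assoc]
  simp_rw [key]
  rw [sum_prod_pi (fun i y => μ i y * ((if i = i0 then g y else 1) * (if i = j0 then h y else 1)))]
  have : ∀ i : Fin N, (∑ y, μ i y * ((if i = i0 then g y else 1) * (if i = j0 then h y else 1)))
      = (if i = i0 then ∑ y, μ i0 y * g y else 1) * (if i = j0 then ∑ y, μ j0 y * h y else 1) := by
    intro i
    by_cases h1 : i = i0
    · subst h1; simp [hij, hμ1]
    · by_cases h2 : i = j0
      · subst h2; simp [h1, hμ1]
      · simp [h1, h2, hμ1 i]
  simp_rw [this]
  rw [Finset.prod_mul_distrib,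
    Finset.prod_ite_eq' Finset.univ i0 (fun _ => ∑ y, μ i0 y * g y),
    Finset.prod_ite_eq' Finset.univ j0 (fun _ => ∑ y, μ j0 y * h y)]
  simp

lemma concentration (hN : 0 < N) (μ : Fin N → X → ℝ)
    (hμ0 : ∀ i y, 0 ≤ μ i y) (hμ1 : ∀ i, ∑ y, μ i y = 1) (sa : X) :
    ∑ x : Fin N → X, (∏ i, μ i (x i)) *
        |(∑ i, if x i = sa then (1:ℝ) else 0) / N - (∑ i, μ i sa) / N|
      ≤ 1 / (2 * Real.sqrt N) := by
  set Y : Fin N → X → ℝ := fun i y => (if y = sa then (1:ℝ) else 0) - μ i sa with hY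
  let P : (Fin N → X) → ℝ := fun x => ∏ i, μ i (x i)
  have hP : ∀ x, P x = ∏ i, μ i (x i) := fun _ => rfl
  have hPnn : ∀ x, 0 ≤ P x := fun x => Finset.prod_nonneg fun i _ => hμ0 i (x i)
  have hP1 : ∑ x : Fin N → X, P x = 1 := expect_const μ hμ1
  have hNpos : (0:ℝ) < N := by exact_mod_cast hN
  have habs : ∀ x : Fin N → X,
      |(∑ i, if x i = sa then (1:ℝ) else 0) / N - (∑ i, μ i sa) / N|
        = |∑ i, Y i (x i)| / N := by
    intro x
    rw [div_sub_div_same, ← Finset.sum_sub_distrib, abs_div, abs_of_pos hNpos]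
  simp_rw [habs]
  have hY2 : ∀ i : Fin N, (∑ y, μ i y * (Y i y * Y i y)) ≤ 1/4 := by
    intro i
    set q := μ i sa with hq
    have expand : ∀ y, μ i y * (Y i y * Y i y)
        = (μ i y * if y = sa then 1 else 0) * (1 - 2*q) + q^2 * μ i y := by
      intro y
      by_cases h : y = sa <;> simp [hY, h, hq] <;> ring
    simp_rw [expand]
    rw [Finset.sum_add_distrib, ← Finset.sum_mul, ← Finset.mul_sum]
    have hind : (∑ y, μ i y * if y = sa then (1:ℝ) else 0) = q := by
      simp_rw [mul_ite, mul_one, mul_zero]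
      rw [Finset.sum_ite_eq' Finset.univ sa (fun y => μ i y)]
      simp [hq]
    rw [hind, hμ1 i]
    nlinarith [sq_nonneg (1 - 2*q)]
  have hYmean : ∀ i : Fin N, (∑ y, μ i y * Y i y) = 0 := by
    intro i
    simp_rw [hY, mul_sub, mul_ite, mul_one, mul_zero]
    rw [Finset.sum_sub_distrib, Finset.sum_ite_eq' Finset.univ sa (fun y => μ i y),
      ← Finset.sum_mul, hμ1 i]
    simp
  have hW2 : ∑ x : Fin N → X, P x * (∑ i, Y i (x i))^2 ≤ N / 4 := by
    have expand : ∀ x : Fin N → X, (∑ i, Y i (x i))^2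
        = ∑ i, ∑ j, Y i (x i) * Y j (x j) := by
      intro x; rw [sq, Finset.sum_mul_sum]
    simp_rw [expand, Finset.mul_sum]
    rw [Finset.sum_comm]
    have : ∀ i : Fin N, ∑ x : Fin N → X, ∑ j, P x * (Y i (x i) * Y j (x j)) ≤ 1/4 := by
      intro i
      rw [Finset.sum_comm]
      have hterm : ∀ j : Fin N, (∑ x : Fin N → X, P x * (Y i (x i) * Y j (x j)))
          = if j = i then ∑ y, μ i y * (Y i y * Y i y) else 0 := by
        intro j
        by_cases h : j = i
        · subst h
          rw [if_pos rfl]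
          exact expect_eval μ hμ1 j (fun y => Y j y * Y j y)
        · rw [if_neg h, expect_eval₂ μ hμ1 i j (fun hh => h hh.symm) (Y i) (Y j), hYmean i]
          ring
      simp_rw [hterm]
      rw [Finset.sum_ite_eq' Finset.univ i]
      simpa using hY2 i
    calc ∑ i : Fin N, ∑ x : Fin N → X, ∑ j, P x * (Y i (x i) * Y j (x j))
        ≤ ∑ _i : Fin N, (1/4 : ℝ) := Finset.sum_le_sum fun i _ => this i
      _ = N / 4 := by simp; ring
  have hCS : (∑ x : Fin N → X, P x * |∑ i, Y i (x i)|)^2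
      ≤ ∑ x : Fin N → X, P x * (∑ i, Y i (x i))^2 := by
    have := Finset.sum_mul_sq_le_sq_mul_sq Finset.univ
      (fun x : Fin N → X => Real.sqrt (P x))
      (fun x : Fin N → X => Real.sqrt (P x) * |∑ i, Y i (x i)|)
    have e1 : ∀ x : Fin N → X, Real.sqrt (P x) * (Real.sqrt (P x) * |∑ i, Y i (x i)|)
        = P x * |∑ i, Y i (x i)| := by
      intro x; rw [← mul_assoc, Real.mul_self_sqrt (hPnn x)]
    have e2 : ∀ x : Fin N → X, Real.sqrt (P x) ^ 2 = P x := fun x => Real.sq_sqrt (hPnn x)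
    have e3 : ∀ x : Fin N → X, (Real.sqrt (P x) * |∑ i, Y i (x i)|)^2
        = P x * (∑ i, Y i (x i))^2 := by
      intro x; rw [mul_pow, Real.sq_sqrt (hPnn x), sq_abs]
    simp_rw [e1, e2, e3] at this
    simpa [hP1] using this
  have hEnn : 0 ≤ ∑ x : Fin N → X, P x * |∑ i, Y i (x i)| :=
    Finset.sum_nonneg fun x _ => mul_nonneg (hPnn x) (abs_nonneg _)
  have hEW : ∑ x : Fin N → X, P x * |∑ i, Y i (x i)| ≤ Real.sqrt N / 2 := by
    have h1 : (∑ x : Fin N → X, P x * |∑ i, Y i (x i)|)^2 ≤ N/4 := le_trans hCS hW2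
    have h2 : Real.sqrt ((∑ x : Fin N → X, P x * |∑ i, Y i (x i)|)^2) ≤ Real.sqrt (N/4) :=
      Real.sqrt_le_sqrt h1
    rw [Real.sqrt_sq hEnn] at h2
    have : Real.sqrt ((N:ℝ)/4) = Real.sqrt N / 2 := by
      rw [show (N:ℝ)/4 = N * (1/2)^2 by ring, Real.sqrt_mul (le_of_lt hNpos),
        Real.sqrt_sq (by norm_num)]
      ring
    linarith [this ▸ h2]
  calc ∑ x : Fin N → X, P x * (|∑ i, Y i (x i)| / N)
      = (∑ x : Fin N → X, P x * |∑ i, Y i (x i)|) / N := by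
        rw [Finset.sum_div]; congr 1; ext x; ring
    _ ≤ (Real.sqrt N / 2) / N := by gcongr
    _ = 1 / (2 * Real.sqrt N) := by
        have hss : Real.sqrt N * Real.sqrt N = (N:ℝ) := Real.mul_self_sqrt (le_of_lt hNpos)
        rw [div_div, div_eq_div_iff (by positivity) (by positivity)]
        linear_combination 2 * hss

end B2Aux

section B2Main

set_option linter.unusedSectionVars false

variable {S A : Type*} [Fintype S] [Fintype A] [DecidableEq S] [DecidableEq A]
  [Nonempty S] [Nonempty A]

lemma prodSA_sum (f : S → ℝ) (g : S → A → ℝ) (hf : ∑ s, f s = 1) (hg : ∀ s, ∑ a, g s a = 1) :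
    ∑ sa : S × A, f sa.1 * g sa.1 sa.2 = 1 := by
  rw [Fintype.sum_prod_type]
  simp_rw [← Finset.mul_sum]
  calc ∑ s, f s * ∑ a, g s a = ∑ s, f s * 1 := by
        apply Finset.sum_congr rfl; intro s _; rw [hg s]
    _ = 1 := by simpa using hf

lemma emp_simplex {N : ℕ} (hN : 0 < N) (x : Fin N → S × A) : IsSimplex (emp N x) := by
  have hNpos : (0:ℝ) < N := by exact_mod_cast hN
  constructor
  · intro sa
    apply div_nonneg _ (le_of_lt hNpos)
    exact Finset.sum_nonneg fun i _ => by positivity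
  · unfold emp
    rw [← Finset.sum_div]
    rw [Finset.sum_comm]
    have : ∀ i : Fin N, (∑ sa : S × A, if x i = sa then (1:ℝ) else 0) = 1 := by
      intro i; rw [Finset.sum_ite_eq Finset.univ (x i) (fun _ => (1:ℝ))]; simp
    simp_rw [this]
    simp
    simp [hN.ne']

lemma psiInd_simplex (T : ℕ) (μ0 : S → ℝ) (hμ0 : IsSimplex μ0)
    (p : ℕ → S → A → (S × A → ℝ) → S → ℝ) (hp : IsKernel T p)
    (π : ℕ → S → A → ℝ) (hπ : IsPolicy π) :
    ∀ t, t ≤ T → IsSimplex (psiInd μ0 p π t) := by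
  intro t
  induction t with
  | zero =>
    intro _
    constructor
    · intro sa; exact mul_nonneg ((hπ 0 sa.1).1 sa.2) (hμ0.1 sa.1)
    · show ∑ sa : S × A, π 0 sa.1 sa.2 * μ0 sa.1 = 1
      simp_rw [mul_comm]
      exact prodSA_sum μ0 (fun s a => π 0 s a) hμ0.2 (fun s => (hπ 0 s).2)
  | succ t ih =>
    intro ht
    have ht' : t ≤ T := Nat.le_of_succ_le ht
    have hΨ : IsSimplex (psiInd μ0 p π t) := ih ht'
    have hker : ∀ sa' : S × A, IsSimplex (p t sa'.1 sa'.2 (psiInd μ0 p π t)) :=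
      fun sa' => hp t ht' sa'.1 sa'.2 _ hΨ
    constructor
    · intro sa
      apply mul_nonneg ((hπ (t+1) sa.1).1 sa.2)
      exact Finset.sum_nonneg fun sa' _ => mul_nonneg ((hker sa').1 sa.1) (hΨ.1 sa')
    · show ∑ sa : S × A, π (t+1) sa.1 sa.2 *
        (∑ sa' : S × A, p t sa'.1 sa'.2 (psiInd μ0 p π t) sa.1 * psiInd μ0 p π t sa') = 1
      simp_rw [mul_comm (π (t+1) _ _)]
      apply prodSA_sum (fun s => ∑ sa' : S × A, p t sa'.1 sa'.2 (psiInd μ0 p π t) s *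
        psiInd μ0 p π t sa') (fun s a => π (t+1) s a) _ (fun s => (hπ (t+1) s).2)
      rw [Finset.sum_comm]
      have : ∀ sa' : S × A, (∑ s, p t sa'.1 sa'.2 (psiInd μ0 p π t) s * psiInd μ0 p π t sa')
          = psiInd μ0 p π t sa' := by
        intro sa'
        rw [← Finset.sum_mul, (hker sa').2, one_mul]
      simp_rw [this]
      exact hΨ.2

lemma simplex_le_one {X : Type*} [Fintype X] {f : X → ℝ} (hf : IsSimplex f) (x : X) :
    f x ≤ 1 := by
  rw [← hf.2]
  exact Finset.single_le_sum (fun y _ => hf.1 y) (Finset.mem_univ x)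

lemma policy_l1_le_two (π π1 : ℕ → S → A → ℝ) (hπ : IsPolicy π) (hπ1 : IsPolicy π1)
    (t : ℕ) (s : S) : ∑ a, |π1 t s a - π t s a| ≤ 2 := by
  calc ∑ a, |π1 t s a - π t s a| ≤ ∑ a, (π1 t s a + π t s a) := by
        apply Finset.sum_le_sum
        intro a _
        rw [abs_sub_le_iff]
        constructor
        · have := (hπ t s).1 a; have := (hπ1 t s).1 a; linarith
        · have := (hπ t s).1 a; have := (hπ1 t s).1 a; linarith
    _ = 2 := by rw [Finset.sum_add_distrib, (hπ t s).2, (hπ1 t s).2]; norm_num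

/-- Core estimate: expectation of `‖emp - m‖₁` under a product measure. -/
lemma core_estimate {N : ℕ} (hN : 0 < N) (μ : Fin N → S × A → ℝ)
    (hμ0 : ∀ i y, 0 ≤ μ i y) (hμ1 : ∀ i, ∑ y, μ i y = 1) (m : S × A → ℝ) :
    ∑ x : Fin N → S × A, (∏ i, μ i (x i)) * norm1 (fun sa => emp N x sa - m sa)
      ≤ ((Fintype.card S : ℝ) * (Fintype.card A : ℝ)) / (2 * Real.sqrt N)
        + norm1 (fun sa => (∑ i, μ i sa) / N - m sa) := by
  have hPnn : ∀ x : Fin N → S × A, 0 ≤ ∏ i, μ i (x i) :=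
    fun x => Finset.prod_nonneg fun i _ => hμ0 i (x i)
  have hP1 : ∑ x : Fin N → S × A, ∏ i, μ i (x i) = 1 := expect_const μ hμ1
  have step1 : ∀ x : Fin N → S × A, norm1 (fun sa => emp N x sa - m sa)
      ≤ (∑ sa : S × A, |emp N x sa - (∑ i, μ i sa) / N|)
        + norm1 (fun sa => (∑ i, μ i sa) / N - m sa) := by
    intro x
    unfold norm1
    rw [← Finset.sum_add_distrib]
    apply Finset.sum_le_sum
    intro sa _
    calc |emp N x sa - m sa|
        = |(emp N x sa - (∑ i, μ i sa) / N) + ((∑ i, μ i sa) / N - m sa)| := by ring_nf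
      _ ≤ _ := abs_add_le _ _
  calc ∑ x : Fin N → S × A, (∏ i, μ i (x i)) * norm1 (fun sa => emp N x sa - m sa)
      ≤ ∑ x : Fin N → S × A, (∏ i, μ i (x i)) *
          ((∑ sa : S × A, |emp N x sa - (∑ i, μ i sa) / N|)
            + norm1 (fun sa => (∑ i, μ i sa) / N - m sa)) := by
        apply Finset.sum_le_sum
        intro x _
        exact mul_le_mul_of_nonneg_left (step1 x) (hPnn x)
    _ = (∑ x : Fin N → S × A, (∏ i, μ i (x i)) *
          (∑ sa : S × A, |emp N x sa - (∑ i, μ i sa) / N|))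
        + norm1 (fun sa => (∑ i, μ i sa) / N - m sa) := by
        simp_rw [mul_add]
        rw [Finset.sum_add_distrib, ← Finset.sum_mul, hP1, one_mul]
    _ ≤ ((Fintype.card S : ℝ) * (Fintype.card A : ℝ)) / (2 * Real.sqrt N)
        + norm1 (fun sa => (∑ i, μ i sa) / N - m sa) := by
        apply add_le_add_left
        simp_rw [Finset.mul_sum]
        rw [Finset.sum_comm]
        have hbd : ∀ sa : S × A,
            (∑ x : Fin N → S × A, (∏ i, μ i (x i)) * |emp N x sa - (∑ i, μ i sa) / N|)
              ≤ 1 / (2 * Real.sqrt N) := by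
          intro sa
          have := concentration hN μ hμ0 hμ1 sa
          simpa [emp] using this
        calc ∑ sa : S × A, ∑ x : Fin N → S × A,
              (∏ i, μ i (x i)) * |emp N x sa - (∑ i, μ i sa) / N|
            ≤ ∑ _sa : S × A, 1 / (2 * Real.sqrt N) :=
              Finset.sum_le_sum fun sa _ => hbd sa
          _ = ((Fintype.card S : ℝ) * (Fintype.card A : ℝ)) / (2 * Real.sqrt N) := by
              rw [Finset.sum_const, Finset.card_univ, Fintype.card_prod]
              ring


/-- One-step propagation bound for the mean of the next-step product kernel. -/
lemma flow_step (T : ℕ) (μ0 : S → ℝ) (hμ0 : IsSimplex μ0)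
    (p : ℕ → S → A → (S × A → ℝ) → S → ℝ) (hp : IsKernel T p)
    (Cp : ℝ) (hlip : LipschitzKernel T p Cp)
    (π : ℕ → S → A → ℝ) (hπ : IsPolicy π)
    {N : ℕ} (hN : 0 < N) (i0 : Fin N) (πv : Fin N → ℕ → S → A → ℝ)
    (hπv : ∀ i, IsPolicy (πv i)) (hoth : ∀ i, i ≠ i0 → πv i = π)
    (t : ℕ) (ht : t ≤ T) (x' : Fin N → S × A) :
    norm1 (fun sa : S × A =>
        (∑ i, p t (x' i).1 (x' i).2 (emp N x') sa.1 * πv i (t+1) sa.1 sa.2) / N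
          - psiInd μ0 p π (t+1) sa)
      ≤ 2 / N + (Cp + 1) * norm1 (fun sa => emp N x' sa - psiInd μ0 p π t sa) := by
  have hNpos : (0:ℝ) < N := by exact_mod_cast hN
  set L : S × A → ℝ := emp N x' with hLdef
  set Ψ : S × A → ℝ := psiInd μ0 p π t with hΨdef
  have hL : IsSimplex L := emp_simplex hN x'
  have hΨ : IsSimplex Ψ := psiInd_simplex T μ0 hμ0 p hp π hπ t ht
  have hkerL : ∀ sa' : S × A, IsSimplex (p t sa'.1 sa'.2 L) :=
    fun sa' => hp t ht sa'.1 sa'.2 L hL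
  have hkerΨ : ∀ sa' : S × A, IsSimplex (p t sa'.1 sa'.2 Ψ) :=
    fun sa' => hp t ht sa'.1 sa'.2 Ψ hΨ
  set B : S → ℝ := fun s => ∑ sa' : S × A, p t sa'.1 sa'.2 L s * L sa' with hBdef
  set C : S → ℝ := fun s => ∑ sa' : S × A, p t sa'.1 sa'.2 Ψ s * Ψ sa' with hCdef
  -- Step A: empirical average of kernels equals kernel integrated against L
  have stepA : ∀ s : S, (∑ i, p t (x' i).1 (x' i).2 L s) / N = B s := by
    intro s
    rw [hBdef]
    have h1 : ∀ sa' : S × A, p t sa'.1 sa'.2 L s * L sa'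
        = (∑ i, if x' i = sa' then p t sa'.1 sa'.2 L s else 0) / N := by
      intro sa'
      rw [hLdef]
      unfold emp
      rw [mul_div_assoc']
      congr 1
      rw [Finset.mul_sum]
      apply Finset.sum_congr rfl
      intro i _
      by_cases h : x' i = sa' <;> simp [h]
    simp_rw [h1]
    rw [← Finset.sum_div]
    congr 1
    rw [Finset.sum_comm]
    apply Finset.sum_congr rfl
    intro i _
    rw [Finset.sum_ite_eq Finset.univ (x' i) (fun sa' => p t sa'.1 sa'.2 L s)]
    simp
  -- Step B: splitting off player i0
  have stepB : ∀ sa : S × A,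
      (∑ i, p t (x' i).1 (x' i).2 L sa.1 * πv i (t+1) sa.1 sa.2)
        = (∑ i, p t (x' i).1 (x' i).2 L sa.1) * π (t+1) sa.1 sa.2
          + p t (x' i0).1 (x' i0).2 L sa.1 *
              (πv i0 (t+1) sa.1 sa.2 - π (t+1) sa.1 sa.2) := by
    intro sa
    have h1 : ∀ i : Fin N, p t (x' i).1 (x' i).2 L sa.1 * πv i (t+1) sa.1 sa.2
        = p t (x' i).1 (x' i).2 L sa.1 * π (t+1) sa.1 sa.2
          + (if i = i0 then p t (x' i0).1 (x' i0).2 L sa.1 *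
              (πv i0 (t+1) sa.1 sa.2 - π (t+1) sa.1 sa.2) else 0) := by
      intro i
      by_cases h : i = i0
      · subst h; simp; ring
      · rw [hoth i h, if_neg h, add_zero]
    simp_rw [h1]
    rw [Finset.sum_add_distrib, ← Finset.sum_mul,
      Finset.sum_ite_eq' Finset.univ i0
        (fun _ => p t (x' i0).1 (x' i0).2 L sa.1 *
          (πv i0 (t+1) sa.1 sa.2 - π (t+1) sa.1 sa.2))]
    simp
  -- pointwise identity
  have hpoint : ∀ sa : S × A,
      (∑ i, p t (x' i).1 (x' i).2 L sa.1 * πv i (t+1) sa.1 sa.2) / N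
          - psiInd μ0 p π (t+1) sa
        = π (t+1) sa.1 sa.2 * (B sa.1 - C sa.1)
          + (p t (x' i0).1 (x' i0).2 L sa.1 / N) *
              (πv i0 (t+1) sa.1 sa.2 - π (t+1) sa.1 sa.2) := by
    intro sa
    have hpsi : psiInd μ0 p π (t+1) sa = π (t+1) sa.1 sa.2 * C sa.1 := rfl
    rw [stepB sa, hpsi, add_div, mul_comm (∑ i, p t (x' i).1 (x' i).2 L sa.1)
      (π (t+1) sa.1 sa.2), mul_div_assoc, stepA sa.1]
    ring
  -- pointwise bound
  have hptbd : ∀ sa : S × A,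
      |(∑ i, p t (x' i).1 (x' i).2 L sa.1 * πv i (t+1) sa.1 sa.2) / N
          - psiInd μ0 p π (t+1) sa|
        ≤ π (t+1) sa.1 sa.2 * |B sa.1 - C sa.1|
          + (p t (x' i0).1 (x' i0).2 L sa.1 / N) *
              |πv i0 (t+1) sa.1 sa.2 - π (t+1) sa.1 sa.2| := by
    intro sa
    rw [hpoint sa]
    calc |_| ≤ |π (t+1) sa.1 sa.2 * (B sa.1 - C sa.1)|
          + |(p t (x' i0).1 (x' i0).2 L sa.1 / N) *
              (πv i0 (t+1) sa.1 sa.2 - π (t+1) sa.1 sa.2)| := abs_add_le _ _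
      _ = _ := by
          rw [abs_mul, abs_mul, abs_of_nonneg ((hπ (t+1) sa.1).1 sa.2),
            abs_of_nonneg (div_nonneg ((hkerL (x' i0)).1 sa.1) (le_of_lt hNpos))]
  -- sum the two parts
  have part1 : ∑ sa : S × A, π (t+1) sa.1 sa.2 * |B sa.1 - C sa.1|
      = ∑ s, |B s - C s| := by
    rw [Fintype.sum_prod_type]
    apply Finset.sum_congr rfl
    intro s _
    dsimp only
    rw [← Finset.sum_mul, (hπ (t+1) s).2, one_mul]
  have part2 : ∑ sa : S × A, (p t (x' i0).1 (x' i0).2 L sa.1 / N) *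
        |πv i0 (t+1) sa.1 sa.2 - π (t+1) sa.1 sa.2| ≤ 2 / N := by
    rw [Fintype.sum_prod_type]
    dsimp only
    have hsbd : ∀ s : S, ∑ a, (p t (x' i0).1 (x' i0).2 L s / N) *
          |πv i0 (t+1) s a - π (t+1) s a|
        ≤ (p t (x' i0).1 (x' i0).2 L s / N) * 2 := by
      intro s
      rw [← Finset.mul_sum]
      apply mul_le_mul_of_nonneg_left _ (div_nonneg ((hkerL (x' i0)).1 s) (le_of_lt hNpos))
      exact policy_l1_le_two π (πv i0) hπ (hπv i0) (t+1) s
    calc ∑ s, ∑ a, (p t (x' i0).1 (x' i0).2 L s / N) * |πv i0 (t+1) s a - π (t+1) s a|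
        ≤ ∑ s, (p t (x' i0).1 (x' i0).2 L s / N) * 2 := Finset.sum_le_sum fun s _ => hsbd s
      _ = 2 / N := by
          simp_rw [div_mul_eq_mul_div, ← Finset.sum_div, ← Finset.sum_mul]
          rw [(hkerL (x' i0)).2, one_mul]
  -- bound ∑_s |B s - C s|
  have part3 : ∑ s, |B s - C s| ≤ (Cp + 1) * norm1 (fun sa => L sa - Ψ sa) := by
    have hsplit : ∀ s : S, |B s - C s|
        ≤ ∑ sa' : S × A, (p t sa'.1 sa'.2 L s * |L sa' - Ψ sa'|
            + |p t sa'.1 sa'.2 L s - p t sa'.1 sa'.2 Ψ s| * Ψ sa') := by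
      intro s
      rw [hBdef, hCdef]
      simp only
      rw [← Finset.sum_sub_distrib]
      calc |∑ sa' : S × A, (p t sa'.1 sa'.2 L s * L sa' - p t sa'.1 sa'.2 Ψ s * Ψ sa')|
          ≤ ∑ sa' : S × A, |p t sa'.1 sa'.2 L s * L sa' - p t sa'.1 sa'.2 Ψ s * Ψ sa'| :=
            Finset.abs_sum_le_sum_abs _ _
        _ ≤ _ := by
            apply Finset.sum_le_sum
            intro sa' _
            calc |p t sa'.1 sa'.2 L s * L sa' - p t sa'.1 sa'.2 Ψ s * Ψ sa'|
                = |p t sa'.1 sa'.2 L s * (L sa' - Ψ sa')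
                    + (p t sa'.1 sa'.2 L s - p t sa'.1 sa'.2 Ψ s) * Ψ sa'| := by ring_nf
              _ ≤ |p t sa'.1 sa'.2 L s * (L sa' - Ψ sa')|
                    + |(p t sa'.1 sa'.2 L s - p t sa'.1 sa'.2 Ψ s) * Ψ sa'| := abs_add_le _ _
              _ = p t sa'.1 sa'.2 L s * |L sa' - Ψ sa'|
                    + |p t sa'.1 sa'.2 L s - p t sa'.1 sa'.2 Ψ s| * Ψ sa' := by
                  rw [abs_mul, abs_mul, abs_of_nonneg ((hkerL sa').1 s),
                    abs_of_nonneg (hΨ.1 sa')]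
    calc ∑ s, |B s - C s|
        ≤ ∑ s, ∑ sa' : S × A, (p t sa'.1 sa'.2 L s * |L sa' - Ψ sa'|
            + |p t sa'.1 sa'.2 L s - p t sa'.1 sa'.2 Ψ s| * Ψ sa') :=
          Finset.sum_le_sum fun s _ => hsplit s
      _ = (∑ sa' : S × A, ∑ s, p t sa'.1 sa'.2 L s * |L sa' - Ψ sa'|)
          + ∑ sa' : S × A, ∑ s, |p t sa'.1 sa'.2 L s - p t sa'.1 sa'.2 Ψ s| * Ψ sa' := by
          rw [← Finset.sum_add_distrib, Finset.sum_comm]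
          apply Finset.sum_congr rfl
          intro s _
          rw [Finset.sum_add_distrib]
      _ ≤ norm1 (fun sa => L sa - Ψ sa) + Cp * norm1 (fun sa => L sa - Ψ sa) := by
          apply add_le_add
          · apply le_of_eq
            unfold norm1
            apply Finset.sum_congr rfl
            intro sa' _
            rw [← Finset.sum_mul, (hkerL sa').2, one_mul]
          · calc ∑ sa' : S × A, ∑ s, |p t sa'.1 sa'.2 L s - p t sa'.1 sa'.2 Ψ s| * Ψ sa'
                ≤ ∑ sa' : S × A, ∑ s, |p t sa'.1 sa'.2 L s - p t sa'.1 sa'.2 Ψ s| := by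
                  apply Finset.sum_le_sum
                  intro sa' _
                  apply Finset.sum_le_sum
                  intro s _
                  exact mul_le_of_le_one_right (abs_nonneg _) (simplex_le_one hΨ sa')
              _ ≤ Cp * norm1 (fun sa => L sa - Ψ sa) := hlip.2 t ht L Ψ hL hΨ
      _ = (Cp + 1) * norm1 (fun sa => L sa - Ψ sa) := by ring
  -- combine
  calc norm1 (fun sa : S × A =>
        (∑ i, p t (x' i).1 (x' i).2 L sa.1 * πv i (t+1) sa.1 sa.2) / N
          - psiInd μ0 p π (t+1) sa)
      ≤ ∑ sa : S × A, (π (t+1) sa.1 sa.2 * |B sa.1 - C sa.1|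
          + (p t (x' i0).1 (x' i0).2 L sa.1 / N) *
              |πv i0 (t+1) sa.1 sa.2 - π (t+1) sa.1 sa.2|) := by
        unfold norm1
        exact Finset.sum_le_sum fun sa _ => hptbd sa
    _ = (∑ sa : S × A, π (t+1) sa.1 sa.2 * |B sa.1 - C sa.1|)
        + ∑ sa : S × A, (p t (x' i0).1 (x' i0).2 L sa.1 / N) *
            |πv i0 (t+1) sa.1 sa.2 - π (t+1) sa.1 sa.2| := Finset.sum_add_distrib
    _ ≤ (Cp + 1) * norm1 (fun sa => L sa - Ψ sa) + 2 / N := by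
        apply add_le_add _ part2
        rw [part1]
        exact part3
    _ = 2 / N + (Cp + 1) * norm1 (fun sa => emp N x' sa - psiInd μ0 p π t sa) := by
        rw [add_comm]


end B2Main

/-- Lemma B.2: in the `N`-player game where player 1 uses `π1` and all others use `π`,
the expected ℓ¹ distance between the empirical state-action distribution and the
mean-field flow `Ψ(π)` is at most `(1/(2√N) + 2/N)|S||A| (C_{p,S,A}^{|𝒯|} - 1)/(C_{p,S,A} - 1)`. -/
theorem empirical_distribution_approximation {S A : Type*} [Fintype S] [Fintype A]
    [DecidableEq S] [DecidableEq A] [Nonempty S] [Nonempty A]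
    (T N : ℕ) (hN : 0 < N) (μ0 : S → ℝ) (hμ0 : IsSimplex μ0)
    (p : ℕ → S → A → (S × A → ℝ) → S → ℝ) (hp : IsKernel T p)
    (Cp : ℝ) (hlip : LipschitzKernel T p Cp)
    (π π1 : ℕ → S → A → ℝ) (hπ : IsPolicy π) (hπ1 : IsPolicy π1)
    (CpSA : ℝ)
    (hCpSA : CpSA = (Cp + 1) * (Fintype.card S : ℝ) * (Fintype.card A : ℝ)) :
    ∀ t ≤ T,
      (∑ x : Fin N → S × A,
          jointLaw N μ0 p (fun i => if i = (⟨0, hN⟩ : Fin N) then π1 else π) t x *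
            norm1 (fun sa : S × A => emp N x sa - psiInd μ0 p π t sa)) ≤
        (1 / (2 * Real.sqrt (N : ℝ)) + 2 / (N : ℝ)) * (Fintype.card S : ℝ) *
          (Fintype.card A : ℝ) * ((CpSA ^ (T + 1) - 1) / (CpSA - 1)) := by
  have hNpos : (0:ℝ) < N := by exact_mod_cast hN
  set i0 : Fin N := ⟨0, hN⟩ with hi0
  set πv : Fin N → ℕ → S → A → ℝ := fun i => if i = i0 then π1 else π with hπvdef
  have hπvP : ∀ i, IsPolicy (πv i) := by
    intro i
    rw [hπvdef]
    by_cases h : i = i0 <;> simp [h, hπ, hπ1]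
  have hoth : ∀ i, i ≠ i0 → πv i = π := by
    intro i h
    rw [hπvdef]
    simp [h]
  have cardS1 : (1:ℝ) ≤ (Fintype.card S : ℝ) := by exact_mod_cast Fintype.card_pos
  have cardA1 : (1:ℝ) ≤ (Fintype.card A : ℝ) := by exact_mod_cast Fintype.card_pos
  have hCp : 0 < Cp := hlip.1
  have hC1 : 1 < CpSA := by
    rw [hCpSA]
    have h1 : (1:ℝ) ≤ (Fintype.card S : ℝ) * (Fintype.card A : ℝ) := by nlinarith
    have h2 : (Cp+1) * 1 ≤ (Cp+1) * ((Fintype.card S : ℝ) * (Fintype.card A : ℝ)) := by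
      nlinarith
    calc (1:ℝ) < Cp + 1 := by linarith
      _ = (Cp+1) * 1 := by ring
      _ ≤ (Cp+1) * ((Fintype.card S : ℝ) * (Fintype.card A : ℝ)) := h2
      _ = (Cp+1) * (Fintype.card S : ℝ) * (Fintype.card A : ℝ) := by ring
  have hCne : CpSA ≠ 1 := ne_of_gt hC1
  have hCple : Cp + 1 ≤ CpSA := by
    rw [hCpSA]
    have h1 : (1:ℝ) ≤ (Fintype.card S : ℝ) * (Fintype.card A : ℝ) := by nlinarith
    nlinarith [mul_le_mul_of_nonneg_left h1 (by linarith : (0:ℝ) ≤ Cp + 1)]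
  have hC0 : 0 < CpSA := lt_trans one_pos hC1
  have hsqrtpos : (0:ℝ) < Real.sqrt N := Real.sqrt_pos.mpr hNpos
  set K : ℝ := ((Fintype.card S : ℝ) * (Fintype.card A : ℝ)) / (2 * Real.sqrt N) + 2 / N
    with hKdef
  have hK0 : 0 ≤ K := by rw [hKdef]; positivity
  -- joint law is a probability mass function
  have hjl : ∀ u, u ≤ T → (∀ x, 0 ≤ jointLaw N μ0 p πv u x) ∧
      (∑ x : Fin N → S × A, jointLaw N μ0 p πv u x) = 1 := by
    intro u
    induction u with
    | zero =>
      intro _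
      constructor
      · intro x
        exact Finset.prod_nonneg fun i _ =>
          mul_nonneg (hμ0.1 _) ((hπvP i 0 (x i).1).1 (x i).2)
      · show (∑ x : Fin N → S × A, ∏ i, (μ0 (x i).1 * πv i 0 (x i).1 (x i).2)) = 1
        exact expect_const (fun i (sa : S × A) => μ0 sa.1 * πv i 0 sa.1 sa.2)
          (fun i => prodSA_sum μ0 (fun s a => πv i 0 s a) hμ0.2 (fun s => (hπvP i 0 s).2))
    | succ u ih =>
      intro hu
      have hu' : u ≤ T := Nat.le_of_succ_le hu
      obtain ⟨ih0, ih1⟩ := ih hu'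
      have hker : ∀ x' : Fin N → S × A, ∀ i : Fin N,
          IsSimplex (p u (x' i).1 (x' i).2 (emp N x')) :=
        fun x' i => hp u hu' (x' i).1 (x' i).2 (emp N x') (emp_simplex hN x')
      have hstep1 : ∀ x' : Fin N → S × A, ∀ i : Fin N,
          (∑ sa : S × A, p u (x' i).1 (x' i).2 (emp N x') sa.1 * πv i (u+1) sa.1 sa.2) = 1 :=
        fun x' i => prodSA_sum (p u (x' i).1 (x' i).2 (emp N x')) (fun s a => πv i (u+1) s a)
          (hker x' i).2 (fun s => (hπvP i (u+1) s).2)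
      constructor
      · intro x
        show 0 ≤ ∑ x' : Fin N → S × A, jointLaw N μ0 p πv u x' *
          ∏ i, p u (x' i).1 (x' i).2 (emp N x') (x i).1 * πv i (u+1) (x i).1 (x i).2
        apply Finset.sum_nonneg
        intro x' _
        apply mul_nonneg (ih0 x')
        exact Finset.prod_nonneg fun i _ =>
          mul_nonneg ((hker x' i).1 (x i).1) ((hπvP i (u+1) (x i).1).1 (x i).2)
      · show (∑ x : Fin N → S × A, ∑ x' : Fin N → S × A, jointLaw N μ0 p πv u x' *
          ∏ i, p u (x' i).1 (x' i).2 (emp N x') (x i).1 * πv i (u+1) (x i).1 (x i).2) = 1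
        rw [Finset.sum_comm]
        calc ∑ x' : Fin N → S × A, ∑ x : Fin N → S × A, jointLaw N μ0 p πv u x' *
              ∏ i, p u (x' i).1 (x' i).2 (emp N x') (x i).1 * πv i (u+1) (x i).1 (x i).2
            = ∑ x' : Fin N → S × A, jointLaw N μ0 p πv u x' := by
              apply Finset.sum_congr rfl
              intro x' _
              have h1 : (∑ x : Fin N → S × A, ∏ i, p u (x' i).1 (x' i).2 (emp N x') (x i).1 *
                  πv i (u+1) (x i).1 (x i).2) = 1 := by
                simpa using expect_const (fun i (sa : S × A) =>
                  p u (x' i).1 (x' i).2 (emp N x') sa.1 * πv i (u+1) sa.1 sa.2) (hstep1 x')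
              rw [← Finset.mul_sum, h1, mul_one]
          _ = 1 := ih1
  -- abbreviation for the expected deviation
  set e : ℕ → ℝ := fun u => ∑ x : Fin N → S × A, jointLaw N μ0 p πv u x *
    norm1 (fun sa : S × A => emp N x sa - psiInd μ0 p π u sa) with hedef
  have he_nonneg : ∀ u, u ≤ T → 0 ≤ e u := by
    intro u hu
    apply Finset.sum_nonneg
    intro x _
    apply mul_nonneg ((hjl u hu).1 x)
    exact Finset.sum_nonneg fun sa _ => abs_nonneg _
  -- base case
  have hbase : e 0 ≤ K := by
    have hμB1 : ∀ i : Fin N, (∑ sa : S × A, μ0 sa.1 * πv i 0 sa.1 sa.2) = 1 :=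
      fun i => prodSA_sum μ0 (fun s a => πv i 0 s a) hμ0.2 (fun s => (hπvP i 0 s).2)
    have h1 : e 0 ≤ ((Fintype.card S : ℝ) * (Fintype.card A : ℝ)) / (2 * Real.sqrt N)
        + norm1 (fun sa => (∑ i, μ0 sa.1 * πv i 0 sa.1 sa.2) / N - psiInd μ0 p π 0 sa) := by
      rw [hedef]
      exact core_estimate hN (fun i sa => μ0 sa.1 * πv i 0 sa.1 sa.2)
        (fun i sa => mul_nonneg (hμ0.1 _) ((hπvP i 0 sa.1).1 sa.2)) hμB1 _
    have h2 : norm1 (fun sa => (∑ i, μ0 sa.1 * πv i 0 sa.1 sa.2) / N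
        - psiInd μ0 p π 0 sa) ≤ 2 / N := by
      have hpt : ∀ sa : S × A, (∑ i, μ0 sa.1 * πv i 0 sa.1 sa.2) / N - psiInd μ0 p π 0 sa
          = (μ0 sa.1 / N) * (π1 0 sa.1 sa.2 - π 0 sa.1 sa.2) := by
        intro sa
        have hsum : (∑ i : Fin N, μ0 sa.1 * πv i 0 sa.1 sa.2)
            = N * (μ0 sa.1 * π 0 sa.1 sa.2)
              + μ0 sa.1 * (π1 0 sa.1 sa.2 - π 0 sa.1 sa.2) := by
          have h1 : ∀ i : Fin N, μ0 sa.1 * πv i 0 sa.1 sa.2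
              = μ0 sa.1 * π 0 sa.1 sa.2 + (if i = i0 then
                  μ0 sa.1 * (π1 0 sa.1 sa.2 - π 0 sa.1 sa.2) else 0) := by
            intro i
            by_cases h : i = i0
            · subst h; rw [hπvdef]; simp; ring
            · rw [hoth i h, if_neg h, add_zero]
          simp_rw [h1]
          rw [Finset.sum_add_distrib, Finset.sum_const, Finset.card_univ,
            Finset.sum_ite_eq' Finset.univ i0
              (fun _ => μ0 sa.1 * (π1 0 sa.1 sa.2 - π 0 sa.1 sa.2))]
          simp
        have hpsi : psiInd μ0 p π 0 sa = π 0 sa.1 sa.2 * μ0 sa.1 := rfl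
        rw [hsum, hpsi]
        field_simp
        ring
      unfold norm1
      simp_rw [hpt]
      calc ∑ sa : S × A, |(μ0 sa.1 / N) * (π1 0 sa.1 sa.2 - π 0 sa.1 sa.2)|
          = ∑ sa : S × A, (μ0 sa.1 / N) * |π1 0 sa.1 sa.2 - π 0 sa.1 sa.2| := by
            apply Finset.sum_congr rfl
            intro sa _
            rw [abs_mul, abs_of_nonneg (div_nonneg (hμ0.1 sa.1) (le_of_lt hNpos))]
        _ ≤ 2 / N := by
            rw [Fintype.sum_prod_type]
            dsimp only
            have hsbd : ∀ s : S, ∑ a, (μ0 s / N) * |π1 0 s a - π 0 s a|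
                ≤ (μ0 s / N) * 2 := by
              intro s
              rw [← Finset.mul_sum]
              exact mul_le_mul_of_nonneg_left
                (policy_l1_le_two π π1 hπ hπ1 0 s)
                (div_nonneg (hμ0.1 s) (le_of_lt hNpos))
            calc ∑ s, ∑ a, (μ0 s / N) * |π1 0 s a - π 0 s a|
                ≤ ∑ s, (μ0 s / N) * 2 := Finset.sum_le_sum fun s _ => hsbd s
              _ = 2 / N := by
                  simp_rw [div_mul_eq_mul_div, ← Finset.sum_div, ← Finset.sum_mul]
                  rw [hμ0.2, one_mul]
    calc e 0 ≤ _ := h1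
      _ ≤ ((Fintype.card S : ℝ) * (Fintype.card A : ℝ)) / (2 * Real.sqrt N) + 2 / N :=
        add_le_add_right h2 _
      _ = K := hKdef.symm
  -- recursive step
  have hrec : ∀ u, u + 1 ≤ T → e (u + 1) ≤ K + (Cp + 1) * e u := by
    intro u hu
    have hu' : u ≤ T := Nat.le_of_succ_le hu
    have hker : ∀ x' : Fin N → S × A, ∀ i : Fin N,
        IsSimplex (p u (x' i).1 (x' i).2 (emp N x')) :=
      fun x' i => hp u hu' (x' i).1 (x' i).2 (emp N x') (emp_simplex hN x')
    have hstep0 : ∀ x' : Fin N → S × A, ∀ i : Fin N, ∀ sa : S × A,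
        0 ≤ p u (x' i).1 (x' i).2 (emp N x') sa.1 * πv i (u+1) sa.1 sa.2 :=
      fun x' i (sa : S × A) => mul_nonneg ((hker x' i).1 sa.1) ((hπvP i (u+1) sa.1).1 sa.2)
    have hstep1 : ∀ x' : Fin N → S × A, ∀ i : Fin N,
        (∑ sa : S × A, p u (x' i).1 (x' i).2 (emp N x') sa.1 * πv i (u+1) sa.1 sa.2) = 1 :=
      fun x' i => prodSA_sum (p u (x' i).1 (x' i).2 (emp N x')) (fun s a => πv i (u+1) s a)
        (hker x' i).2 (fun s => (hπvP i (u+1) s).2)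
    have hswap : e (u+1) = ∑ x' : Fin N → S × A, jointLaw N μ0 p πv u x' *
        ∑ x : Fin N → S × A,
          (∏ i, p u (x' i).1 (x' i).2 (emp N x') (x i).1 * πv i (u+1) (x i).1 (x i).2) *
            norm1 (fun sa : S × A => emp N x sa - psiInd μ0 p π (u+1) sa) := by
      rw [hedef]
      show (∑ x : Fin N → S × A, (∑ x' : Fin N → S × A, jointLaw N μ0 p πv u x' *
          ∏ i, p u (x' i).1 (x' i).2 (emp N x') (x i).1 * πv i (u+1) (x i).1 (x i).2) *
            norm1 (fun sa : S × A => emp N x sa - psiInd μ0 p π (u+1) sa)) = _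
      simp_rw [Finset.sum_mul, Finset.mul_sum]
      rw [Finset.sum_comm]
      apply Finset.sum_congr rfl
      intro x' _
      apply Finset.sum_congr rfl
      intro x _
      ring
    have hinner : ∀ x' : Fin N → S × A,
        (∑ x : Fin N → S × A,
          (∏ i, p u (x' i).1 (x' i).2 (emp N x') (x i).1 * πv i (u+1) (x i).1 (x i).2) *
            norm1 (fun sa : S × A => emp N x sa - psiInd μ0 p π (u+1) sa))
          ≤ K + (Cp + 1) * norm1 (fun sa => emp N x' sa - psiInd μ0 p π u sa) := by
      intro x'
      have hcore := core_estimate hN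
        (fun i sa => p u (x' i).1 (x' i).2 (emp N x') sa.1 * πv i (u+1) sa.1 sa.2)
        (fun i sa => hstep0 x' i sa) (hstep1 x') (psiInd μ0 p π (u+1))
      have hflow := flow_step T μ0 hμ0 p hp Cp hlip π hπ hN i0 πv hπvP hoth u hu' x'
      calc (∑ x : Fin N → S × A,
            (∏ i, p u (x' i).1 (x' i).2 (emp N x') (x i).1 * πv i (u+1) (x i).1 (x i).2) *
              norm1 (fun sa : S × A => emp N x sa - psiInd μ0 p π (u+1) sa))
          ≤ ((Fintype.card S : ℝ) * (Fintype.card A : ℝ)) / (2 * Real.sqrt N)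
            + norm1 (fun sa : S × A =>
                (∑ i, p u (x' i).1 (x' i).2 (emp N x') sa.1 * πv i (u+1) sa.1 sa.2) / N
                  - psiInd μ0 p π (u+1) sa) := hcore
        _ ≤ ((Fintype.card S : ℝ) * (Fintype.card A : ℝ)) / (2 * Real.sqrt N)
            + (2 / N + (Cp + 1) * norm1 (fun sa => emp N x' sa - psiInd μ0 p π u sa)) :=
            add_le_add_right hflow _
        _ = K + (Cp + 1) * norm1 (fun sa => emp N x' sa - psiInd μ0 p π u sa) := by
            rw [hKdef]; ring
    calc e (u+1)
        ≤ ∑ x' : Fin N → S × A, jointLaw N μ0 p πv u x' *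
            (K + (Cp + 1) * norm1 (fun sa => emp N x' sa - psiInd μ0 p π u sa)) := by
          rw [hswap]
          exact Finset.sum_le_sum fun x' _ =>
            mul_le_mul_of_nonneg_left (hinner x') ((hjl u hu').1 x')
      _ = K + (Cp + 1) * e u := by
          simp_rw [mul_add]
          rw [Finset.sum_add_distrib, ← Finset.sum_mul, (hjl u hu').2, one_mul, hedef]
          congr 1
          rw [Finset.mul_sum]
          apply Finset.sum_congr rfl
          intro x' _
          ring
  -- induction: e u ≤ K * geometric sum
  have hgeom_nonneg : ∀ n : ℕ, 0 ≤ ∑ j ∈ Finset.range n, CpSA ^ j :=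
    fun n => Finset.sum_nonneg fun j _ => pow_nonneg (le_of_lt hC0) j
  have hmain : ∀ u, u ≤ T → e u ≤ K * ∑ j ∈ Finset.range (u + 1), CpSA ^ j := by
    intro u
    induction u with
    | zero =>
      intro _
      simpa using hbase
    | succ u ih =>
      intro hu
      have hu' : u ≤ T := Nat.le_of_succ_le hu
      calc e (u + 1) ≤ K + (Cp + 1) * e u := hrec u hu
        _ ≤ K + CpSA * (K * ∑ j ∈ Finset.range (u + 1), CpSA ^ j) := by
            apply add_le_add_right
            calc (Cp + 1) * e u ≤ (Cp + 1) * (K * ∑ j ∈ Finset.range (u + 1), CpSA ^ j) :=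
                mul_le_mul_of_nonneg_left (ih hu') (by linarith)
              _ ≤ CpSA * (K * ∑ j ∈ Finset.range (u + 1), CpSA ^ j) := by
                exact mul_le_mul_of_nonneg_right hCple
                  (mul_nonneg hK0 (hgeom_nonneg (u + 1)))
        _ = K * ∑ j ∈ Finset.range (u + 2), CpSA ^ j := by
            conv_rhs => rw [geom_sum_succ]
            ring
  -- conclude
  intro t ht
  have h1 : e t ≤ K * ∑ j ∈ Finset.range (T + 1), CpSA ^ j := by
    calc e t ≤ K * ∑ j ∈ Finset.range (t + 1), CpSA ^ j := hmain t ht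
      _ ≤ K * ∑ j ∈ Finset.range (T + 1), CpSA ^ j := by
          apply mul_le_mul_of_nonneg_left _ hK0
          apply Finset.sum_le_sum_of_subset_of_nonneg
          · exact Finset.range_subset_range.mpr (by omega)
          · intro j _ _
            exact pow_nonneg (le_of_lt hC0) j
  have hKε : K ≤ (1 / (2 * Real.sqrt N) + 2 / N) * (Fintype.card S : ℝ) *
      (Fintype.card A : ℝ) := by
    rw [hKdef]
    have h2N : (0:ℝ) ≤ 2 / N := by positivity
    have hcards : (1:ℝ) ≤ (Fintype.card S : ℝ) * (Fintype.card A : ℝ) := by nlinarith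
    have : 2 / N ≤ 2 / N * ((Fintype.card S : ℝ) * (Fintype.card A : ℝ)) := by nlinarith
    calc ((Fintype.card S : ℝ) * (Fintype.card A : ℝ)) / (2 * Real.sqrt N) + 2 / N
        ≤ ((Fintype.card S : ℝ) * (Fintype.card A : ℝ)) / (2 * Real.sqrt N)
          + 2 / N * ((Fintype.card S : ℝ) * (Fintype.card A : ℝ)) := by linarith
      _ = (1 / (2 * Real.sqrt N) + 2 / N) * (Fintype.card S : ℝ) *
          (Fintype.card A : ℝ) := by ring
  have hfinal : e t ≤ (1 / (2 * Real.sqrt N) + 2 / N) * (Fintype.card S : ℝ) *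
      (Fintype.card A : ℝ) * ((CpSA ^ (T + 1) - 1) / (CpSA - 1)) := by
    rw [← geom_sum_eq hCne (T + 1)]
    calc e t ≤ K * ∑ j ∈ Finset.range (T + 1), CpSA ^ j := h1
      _ ≤ (1 / (2 * Real.sqrt N) + 2 / N) * (Fintype.card S : ℝ) *
          (Fintype.card A : ℝ) * ∑ j ∈ Finset.range (T + 1), CpSA ^ j :=
        mul_le_mul_of_nonneg_right hKε (hgeom_nonneg (T + 1))
  exact hfinal

end CMFG
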